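/- arXiv:1810.00865 — 2 statements merged into one kernel-verified Lean document; each statement's English description precedes it below -/
import Mathlib

section
/- Let T ≥ 2, b > 0, and H_b = -b|1⟩⟨1| + L where L is the path-graph Laplacian on ℂ^T. Then the minimum eigenvalue of H_b satisfies λ_min(H_b) < -b²/(b+1). -/
/-- The path-graph Laplacian on `ℂ^T`: `∑_{t=1}^{T-1} (|t⟩-|t+1⟩)(⟨t|-⟨t+1|)`,
with sites indexed by `Fin T` (site `t` of the paper is index `t-1`). -/
noncomputable def pathLap (T : ℕ) : Matrix (Fin T) (Fin T) ℂ :=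
  ∑ t ∈ Finset.range (T - 1),
    Matrix.vecMulVec
      (fun i : Fin T => (if (i : ℕ) = t then (1:ℂ) else 0) - (if (i : ℕ) = t + 1 then 1 else 0))
      (fun i : Fin T => (if (i : ℕ) = t then (1:ℂ) else 0) - (if (i : ℕ) = t + 1 then 1 else 0))

/-- `H_b = -b|1⟩⟨1| + pathLap` on `ℂ^T`. -/
noncomputable def Hb (T : ℕ) (b : ℝ) : Matrix (Fin T) (Fin T) ℂ :=
  pathLap T - (b : ℂ) •
    Matrix.vecMulVec (fun i : Fin T => if (i : ℕ) = 0 then (1:ℂ) else 0)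
      (fun i : Fin T => if (i : ℕ) = 0 then (1:ℂ) else 0)

/-!
For a Hermitian matrix `A`, `A - λ_min • 1` is positive semidefinite, so
`λ_min ‖x‖² ≤ re ⟪x, A x⟫` for every `x`. Take the trial vector `ψ_t = r^t` with `r = (b+1)⁻¹`:
the quadratic form of `H_b` at `ψ` is `∑ (ψ_t - ψ_{t+1})² - b ψ_0²`, and since `1 - r = b r`
it telescopes to `-(b²/(b+1)) ‖ψ‖² - b r^(2T-1)`, strictly below `-(b²/(b+1)) ‖ψ‖²`.
-/

open Matrix Finset
open scoped ComplexOrder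

namespace Matrix.IsHermitian

variable {n 𝕜 : Type*} [Fintype n] [DecidableEq n] [RCLike 𝕜] {A : Matrix n n 𝕜}

lemma posSemidef_sub_smul_one (hA : A.IsHermitian) {μ : ℝ} (hμ : ∀ i, μ ≤ hA.eigenvalues i) :
    (A - (μ : 𝕜) • 1).PosSemidef := by
  have hdiag : A - (μ : 𝕜) • 1 = Unitary.conjStarAlgAut 𝕜 _ hA.eigenvectorUnitary
      (diagonal (RCLike.ofReal ∘ (hA.eigenvalues - fun _ ↦ μ))) := by
    conv_lhs => rw [hA.spectral_theorem]
    rw [← map_one (Unitary.conjStarAlgAut 𝕜 _ hA.eigenvectorUnitary), ← map_smul, ← map_sub]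
    congr 1
    ext i j
    by_cases h : i = j <;> simp [h, Algebra.algebraMap_eq_smul_one]
  rw [hdiag]
  simp [Unitary.isUnit_coe.posSemidef_star_right_conjugate_iff, hμ]

lemma mul_re_dotProduct_le (hA : A.IsHermitian) {μ : ℝ} (hμ : ∀ i, μ ≤ hA.eigenvalues i)
    (x : n → 𝕜) : μ * RCLike.re (star x ⬝ᵥ x) ≤ RCLike.re (star x ⬝ᵥ (A *ᵥ x)) := by
  have hpsd := (hA.posSemidef_sub_smul_one hμ).re_dotProduct_nonneg x
  simp only [sub_mulVec, smul_mulVec, one_mulVec, dotProduct_sub, dotProduct_smul, map_sub,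
    smul_eq_mul, RCLike.re_ofReal_mul] at hpsd
  linarith

end Matrix.IsHermitian

lemma dotProduct_vecMulVec_mulVec {n α : Type*} [Fintype n] [CommSemiring α] (w u v x : n → α) :
    w ⬝ᵥ (vecMulVec u v *ᵥ x) = (w ⬝ᵥ u) * (v ⬝ᵥ x) := by
  rw [vecMulVec_mulVec, dotProduct_smul]
  simp

lemma indicator_dotProduct {T t : ℕ} (ht : t < T) (x : ℕ → ℂ) :
    (fun i : Fin T ↦ if (i : ℕ) = t then (1 : ℂ) else 0) ⬝ᵥ (fun i : Fin T ↦ x i) = x t := by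
  simp [dotProduct, Fin.sum_univ_eq_sum_range (fun i ↦ if i = t then x i else 0), ht]

lemma edge_dotProduct {T t : ℕ} (ht : t + 1 < T) (x : ℕ → ℂ) :
    (fun i : Fin T ↦ (if (i : ℕ) = t then (1 : ℂ) else 0) - (if (i : ℕ) = t + 1 then 1 else 0))
      ⬝ᵥ (fun i : Fin T ↦ x i) = x t - x (t + 1) := by
  rw [← indicator_dotProduct (Nat.lt_of_succ_lt ht) x, ← indicator_dotProduct ht x,
    ← sub_dotProduct]
  rfl

lemma star_dotProduct_pathLap_mulVec (T : ℕ) (x : ℕ → ℂ) :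
    star (fun i : Fin T ↦ x i) ⬝ᵥ (pathLap T *ᵥ fun i ↦ x i)
      = ((∑ t ∈ range (T - 1), ‖x t - x (t + 1)‖ ^ 2 : ℝ) : ℂ) := by
  rw [pathLap, sum_mulVec, dotProduct_sum, Complex.ofReal_sum]
  refine sum_congr rfl fun t ht ↦ ?_
  have ht : t + 1 < T := by rw [mem_range] at ht; omega
  rw [dotProduct_vecMulVec_mulVec, dotProduct_comm,
    show star (fun i : Fin T ↦ x i) = fun i : Fin T ↦ star (x i) from rfl,
    edge_dotProduct ht, edge_dotProduct ht (fun n ↦ star (x n)), ← star_sub, RCLike.star_def,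
    RCLike.conj_mul]
  push_cast
  rfl

lemma star_dotProduct_Hb_mulVec {T : ℕ} (hT : 0 < T) (b : ℝ) (x : ℕ → ℂ) :
    star (fun i : Fin T ↦ x i) ⬝ᵥ (Hb T b *ᵥ fun i ↦ x i)
      = ((∑ t ∈ range (T - 1), ‖x t - x (t + 1)‖ ^ 2 - b * ‖x 0‖ ^ 2 : ℝ) : ℂ) := by
  rw [Hb, sub_mulVec, dotProduct_sub, star_dotProduct_pathLap_mulVec, smul_mulVec, dotProduct_smul,
    dotProduct_vecMulVec_mulVec, dotProduct_comm,
    show star (fun i : Fin T ↦ x i) = fun i : Fin T ↦ star (x i) from rfl,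
    indicator_dotProduct hT, indicator_dotProduct hT (fun n ↦ star (x n)), RCLike.star_def,
    RCLike.conj_mul]
  push_cast
  rfl

lemma re_star_dotProduct_self (T : ℕ) (x : ℕ → ℂ) :
    RCLike.re (star (fun i : Fin T ↦ x i) ⬝ᵥ fun i ↦ x i) = ∑ t ∈ range T, ‖x t‖ ^ 2 := by
  simp only [dotProduct, Pi.star_apply, RCLike.star_def, RCLike.conj_mul, ← RCLike.ofReal_pow,
    map_sum, RCLike.ofReal_re]
  exact Fin.sum_univ_eq_sum_range (fun i ↦ ‖x i‖ ^ 2) T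

lemma geom_energy_add_mul_normSq_eq {b r : ℝ} (hr : (b + 1) * r = 1) (n : ℕ) :
    ∑ t ∈ range n, (r ^ t - r ^ (t + 1)) ^ 2 - b + b ^ 2 * r * ∑ t ∈ range (n + 1), (r ^ t) ^ 2
      = -(b * r ^ (2 * n + 1)) := by
  induction n with
  | zero =>
    simp only [zero_add, sum_range_zero, sum_range_one]
    linear_combination b * hr
  | succ n ih =>
    rw [sum_range_succ, sum_range_succ _ (n + 1)]
    linear_combination ih + r ^ (2 * n) * (b * r ^ 2 + r - 1) * hr

/-- The minimum eigenvalue of `H_b` satisfies `λ_min < -b²/(b+1)`: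
there is an eigenvalue below `-b²/(b+1)` (and it is the least one). -/
theorem stmt1 (T : ℕ) (hT : 2 ≤ T) (b : ℝ) (hb : 0 < b)
    (hH : (Hb T b).IsHermitian) :
    ∃ i : Fin T, hH.eigenvalues i < -(b ^ 2 / (b + 1)) ∧
      ∀ j : Fin T, hH.eigenvalues i ≤ hH.eigenvalues j := by
  have : Nonempty (Fin T) := ⟨⟨0, by omega⟩⟩
  obtain ⟨i, hmin⟩ := Finite.exists_min hH.eigenvalues
  refine ⟨i, ?_, hmin⟩
  set r := (b + 1)⁻¹
  have hr : (b + 1) * r = 1 := mul_inv_cancel₀ (by positivity)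
  let ψ : ℕ → ℂ := fun t ↦ ((r ^ t : ℝ) : ℂ)
  have hvar := hH.mul_re_dotProduct_le hmin fun t : Fin T ↦ ψ t
  rw [re_star_dotProduct_self T ψ, star_dotProduct_Hb_mulVec (by omega) b ψ] at hvar
  simp only [ψ, ← Complex.ofReal_sub, Complex.norm_real, Real.norm_eq_abs, sq_abs,
    RCLike.re_to_complex, Complex.ofReal_re, pow_zero, one_pow, mul_one] at hvar
  have henergy := geom_energy_add_mul_normSq_eq hr (T - 1)
  rw [Nat.sub_add_cancel (by omega)] at henergy
  have hnormSq : 0 < ∑ t ∈ range T, (r ^ t) ^ 2 :=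
    sum_pos (fun t _ ↦ by positivity) (nonempty_range_iff.mpr (by omega))
  have hgap : 0 < b * r ^ (2 * (T - 1) + 1) := by positivity
  rw [show b ^ 2 / (b + 1) = b ^ 2 * r from div_eq_mul_inv _ _]
  exact lt_of_mul_lt_mul_right (by linarith) hnormSq.le
end

section
/- Let h₁,...,h_N be Hermitian operators on a Hilbert space ℋ and suppose tiling projectors force all cross terms to vanish: for i ≠ j and operators of the form V_i = h_i ⊗ |T_i⟩⟨T_i|_i acting on ℋ ⊗ (⊗_k ℂ^{T_k}) on distinct tensor factors with additional mutually orthogonal tile projectors, V_i V_j = 0. Then for the self-energy series, the n-th order term is V₋₊(G₊V₊)^n G₊V₊₋ = Σ_{i=1}^N p_{0,i}² η_i^{n+1} h_i^{n+2} ⊗ Π₋, where p_{0,i} = ⟨T_i|Ψ_{0,i}⟩, η_i(z) = Σ_{k>0} (z - μ_{k,i})^{-1} |⟨T_i|Ψ_{k,i}⟩|², with {|Ψ_{k,i}⟩, μ_{k,i}} the eigensystem of the i-th ancilla Hamiltonian (μ_{0,i} = 0 its ground energy) and Π₋ the projector onto the joint ancilla ground space. -/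
open scoped Matrix

section Gadget

variable {σ : Type*} [Fintype σ] [DecidableEq σ]
variable {N : ℕ} {T : Fin N → ℕ} [∀ k, NeZero (T k)]

/-- The joint ancilla configuration space: one chain `Fin (T k)` per interaction. -/
abbrev Anc (T : Fin N → ℕ) : Type _ := ∀ k : Fin N, Fin (T k)

/-- Kronecker product of a system operator with an ancilla operator. -/
def kron (M : Matrix σ σ ℂ) (Q : Matrix (Anc T) (Anc T) ℂ) :
    Matrix (σ × Anc T) (σ × Anc T) ℂ :=
  Matrix.of fun x y => M x.1 y.1 * Q x.2 y.2

/-- The projector `|T_i⟩⟨T_i|` on ancilla factor `i`, identity on all other factors. -/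
def Qproj (Tidx : ∀ k : Fin N, Fin (T k)) (i : Fin N) : Matrix (Anc T) (Anc T) ℂ :=
  Matrix.of fun g g' =>
    if g i = Tidx i ∧ g' i = Tidx i ∧ ∀ j, j ≠ i → g j = g' j then 1 else 0

/-- The joint ground-space projector `Π₋ = ⊗_k |Ψ_{0,k}⟩⟨Ψ_{0,k}|`. -/
def Pminus (Ψ : ∀ k : Fin N, Fin (T k) → Fin (T k) → ℂ) : Matrix (Anc T) (Anc T) ℂ :=
  Matrix.of fun g g' => ∏ k, Ψ k 0 (g k) * star (Ψ k 0 (g' k))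

/-- `G₊(z) = Π₊ (z - C ∑_k H_clock^{(k)})⁻¹ Π₊`, written spectrally: the sum over all
joint excited ancilla eigenstates `f ≠ 0` of `(z - C ∑_k μ_{f k,k})⁻¹ |Φ_f⟩⟨Φ_f|`. -/
noncomputable def Gplus (Ψ : ∀ k : Fin N, Fin (T k) → Fin (T k) → ℂ)
    (μ : ∀ k : Fin N, Fin (T k) → ℝ) (C : ℝ) (z : ℂ) : Matrix (Anc T) (Anc T) ℂ :=
  Matrix.of fun g g' =>
    ∑ f ∈ Finset.univ.erase (fun k => (0 : Fin (T k))),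
      (z - (C : ℂ) * ∑ k, (μ k (f k) : ℂ))⁻¹ *
        (∏ k, Ψ k (f k) (g k)) * star (∏ k, Ψ k (f k) (g' k))

/-- `η_i(z) = ∑_{k>0} (z - C μ_{k,i})⁻¹ |⟨T_i|Ψ_{k,i}⟩|²`. -/
noncomputable def eta (Ψ : ∀ k : Fin N, Fin (T k) → Fin (T k) → ℂ)
    (μ : ∀ k : Fin N, Fin (T k) → ℝ) (C : ℝ) (z : ℂ)
    (Tidx : ∀ k : Fin N, Fin (T k)) (i : Fin N) : ℂ :=
  ∑ k ∈ Finset.univ.erase (0 : Fin (T i)),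
    (z - (C : ℂ) * (μ i k : ℂ))⁻¹ * ((‖Ψ i k (Tidx i)‖ ^ 2 : ℝ) : ℂ)

end Gadget

/-!
The hypothesis on cross terms, read off at the ancilla entry `(T, T)`, gives `h_i h_j = 0` for
`i ≠ j`. Hence every product of operators `∑_i h_i ⊗ X_i` collapses to a single sum
`∑_i h_i^m ⊗ (X_i ⋯)`, and the theorem reduces to one ancilla identity for each `i`.

In the ancilla, `Π₋ = |Φ₀⟩⟨Φ₀|` has rank one and `G₊ = Π₊ G₊ Π₊`, so the order-`n` factor is
`(Φ₀ Q_i (G₊ Q_i)^(n+1) · Φ₀) Π₋`. Moreover `Φ₀ Q_i = p_{0,i} t_i` with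
`t_i = ⟨T_i| ⊗ ⊗_{j ≠ i} ⟨Ψ_{0,j}|`, and `t_i` is a left eigenvector of `G₊ Q_i` with eigenvalue
`η_i`: expanding `⟨T_i|` in the eigenbasis of the `i`-th clock writes `t_i` as a combination of
the joint eigenstates excited in factor `i` only, on which `G₊` acts by `(z - C μ_{k,i})⁻¹`.
Finally `t_i · Φ₀ = p_{0,i}`. The eigenvectors being real, everything is computed with the
bilinear pairing `⬝ᵥ` and row vectors.
-/

namespace TiledSelfEnergy

open Matrix Finset Function

theorem mul_projected_chain {R : Type*} [Ring R] {P G : R} (hPG : P * G = G) (hGP : G * P = G)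
    (A B D : R) (n : ℕ) :
    A * P * (G * (P * B * P)) ^ n * (G * (P * B * D)) = A * (G * B) ^ (n + 1) * D := by
  have hGB : P * (G * B) = G * B := by rw [← mul_assoc, hPG]
  have hPBP : G * (P * B * P) = G * B * P := by simp only [← mul_assoc, hGP]
  have hPBD : G * (P * B * D) = G * B * D := by simp only [← mul_assoc, hGP]
  have hPow : P * (G * B) ^ (n + 1) = (G * B) ^ (n + 1) := by rw [pow_succ', ← mul_assoc, hGB]
  calc A * P * (G * (P * B * P)) ^ n * (G * (P * B * D))
      = A * (P * ((G * B * P) ^ n * (G * B))) * D := by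
        rw [hPBP, hPBD]; simp only [mul_assoc]
    _ = A * (G * B) ^ (n + 1) * D := by
        rw [mul_pow_mul, hGB, ← pow_succ', hPow]

theorem vecMul_pow_of_vecMul_eq_smul {ι R : Type*} [Fintype ι] [DecidableEq ι] [CommRing R]
    {v : ι → R} {M : Matrix ι ι R} {c : R} (hv : v ᵥ* M = c • v) (n : ℕ) :
    v ᵥ* M ^ n = c ^ n • v := by
  induction n with
  | zero => simp
  | succ n ih => rw [pow_succ, ← vecMul_vecMul, ih, smul_vecMul, hv, smul_smul, ← pow_succ]

theorem vecMul_sum_smul_vecMulVec_self {ι α R : Type*} [Fintype α] [DecidableEq ι] [CommRing R]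
    {φ : ι → α → R} (hφ : ∀ a b, φ a ⬝ᵥ φ b = if a = b then 1 else 0)
    (S : Finset ι) (r : ι → R) (a : ι) :
    φ a ᵥ* ∑ b ∈ S, r b • vecMulVec (φ b) (φ b) = if a ∈ S then r a • φ a else 0 := by
  simp only [vecMul_sum, vecMul_smul, vecMul_vecMulVec, hφ, ite_smul, one_smul, zero_smul,
    smul_ite, smul_zero, sum_ite_eq]

theorem vecMulVec_self_mul_mul_vecMulVec_self {ι R : Type*} [Fintype ι] [CommRing R]
    (u : ι → R) (M : Matrix ι ι R) :
    vecMulVec u u * M * vecMulVec u u = ((u ᵥ* M) ⬝ᵥ u) • vecMulVec u u := by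
  rw [vecMulVec_mul, vecMulVec_mul_vecMulVec, vecMulVec_smul]

theorem sum_row_mul_row_of_mul_transpose_eq_one {n R : Type*} [Fintype n] [DecidableEq n]
    [CommRing R] {A : n → n → R} (hA : of A * (of A)ᵀ = 1) (k l : n) :
    ∑ t, A k t * A l t = if k = l then 1 else 0 := by
  simpa [mul_apply, one_apply] using congrFun (congrFun hA k) l

theorem sum_col_mul_col_of_mul_transpose_eq_one {n R : Type*} [Fintype n] [DecidableEq n]
    [CommRing R] {A : n → n → R} (hA : of A * (of A)ᵀ = 1) (t t' : n) :
    ∑ k, A k t * A k t' = if t = t' then 1 else 0 := by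
  have hA' : (of A)ᵀ * of A = 1 := mul_eq_one_comm.mp hA
  simpa [mul_apply, one_apply] using congrFun (congrFun hA' t) t'

theorem of_mul_transpose_eq_one_of_isReal {n : Type*} [Fintype n] [DecidableEq n]
    {Ψ : n → n → ℂ} (horth : ∀ k l, star (Ψ k) ⬝ᵥ Ψ l = if k = l then (1 : ℂ) else 0)
    (hreal : ∀ k t, (Ψ k t).im = 0) :
    of Ψ * (of Ψ)ᵀ = 1 := by
  ext k l
  simp only [mul_apply, one_apply, transpose_apply, of_apply]
  rw [← horth k l, dotProduct]
  refine sum_congr rfl fun t _ => ?_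
  rw [Pi.star_apply, Complex.star_def, Complex.conj_eq_iff_im.mpr (hreal k t)]

section Ancilla

variable {N : ℕ} {T : Fin N → ℕ}

/-- The product eigenvector `Φ_f = ⊗_k Ψ_{f k, k}` of `∑_k H_clock^{(k)}`. -/
def jointState (Ψ : ∀ k : Fin N, Fin (T k) → Fin (T k) → ℂ) (f : Anc T) : Anc T → ℂ :=
  fun g => ∏ k, Ψ k (f k) (g k)

noncomputable def jointResolvent (μ : ∀ k : Fin N, Fin (T k) → ℝ) (C : ℝ) (z : ℂ) (f : Anc T) :
    ℂ :=
  (z - (C : ℂ) * ∑ k, (μ k (f k) : ℂ))⁻¹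

/-- The row vector `⟨T_i| ⊗ ⊗_{j ≠ i} ⟨Ψ_{0,j}|`. -/
def tileVec [∀ k, NeZero (T k)] (Ψ : ∀ k : Fin N, Fin (T k) → Fin (T k) → ℂ)
    (Tidx : ∀ k : Fin N, Fin (T k)) (i : Fin N) : Anc T → ℂ :=
  fun g => if g i = Tidx i then ∏ j ∈ univ.erase i, Ψ j 0 (g j) else 0

variable {Ψ : ∀ k : Fin N, Fin (T k) → Fin (T k) → ℂ} {μ : ∀ k : Fin N, Fin (T k) → ℝ}
  {C : ℝ} {z : ℂ} {Tidx : ∀ k : Fin N, Fin (T k)}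

theorem jointState_dotProduct (hΨ : ∀ i, of (Ψ i) * (of (Ψ i))ᵀ = 1) (f f' : Anc T) :
    jointState Ψ f ⬝ᵥ jointState Ψ f' = if f = f' then 1 else 0 := by
  simp only [dotProduct, jointState, ← prod_mul_distrib]
  rw [← Fintype.prod_sum fun k t => Ψ k (f k) t * Ψ k (f' k) t]
  simp only [sum_row_mul_row_of_mul_transpose_eq_one (hΨ _), prod_boole, mem_univ, true_implies,
    funext_iff]

theorem jointState_update_zero_apply [∀ k, NeZero (T k)] (i : Fin N) (k : Fin (T i))
    (g : Anc T) :
    jointState Ψ (update 0 i k) g = Ψ i k (g i) * ∏ j ∈ univ.erase i, Ψ j 0 (g j) := by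
  rw [jointState, ← mul_prod_erase univ _ (mem_univ i), update_self]
  congr 1
  exact prod_congr rfl fun j hj => by rw [update_of_ne (ne_of_mem_erase hj), Pi.zero_apply]

theorem tileVec_eq_sum [∀ k, NeZero (T k)] (hΨ : ∀ i, of (Ψ i) * (of (Ψ i))ᵀ = 1) (i : Fin N) :
    tileVec Ψ Tidx i = ∑ k, Ψ i k (Tidx i) • jointState Ψ (update 0 i k) := by
  funext g
  simp only [Finset.sum_apply, Pi.smul_apply, smul_eq_mul, jointState_update_zero_apply,
    ← mul_assoc, ← sum_mul, sum_col_mul_col_of_mul_transpose_eq_one (hΨ _), tileVec,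
    eq_comm (a := g i)]
  split_ifs <;> simp

theorem vecMul_Qproj_apply (a : Anc T → ℂ) (i : Fin N) (g : Anc T) :
    (a ᵥ* Qproj Tidx i) g = if g i = Tidx i then a (update g i (Tidx i)) else 0 := by
  have hsupp : ∀ g' : Anc T, (g' i = Tidx i ∧ g i = Tidx i ∧ ∀ j, j ≠ i → g' j = g j)
      ↔ (g i = Tidx i ∧ g' = update g i (Tidx i)) := by
    intro g'
    refine ⟨fun ⟨h1, h2, h3⟩ => ⟨h2, funext fun j => ?_⟩, ?_⟩
    · by_cases hj : j = i
      · subst hj; rw [update_self, h1]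
      · rw [update_of_ne hj, h3 j hj]
    · rintro ⟨h2, rfl⟩
      exact ⟨update_self _ _ _, h2, fun j hj => update_of_ne hj _ _⟩
  simp only [vecMul, dotProduct, Qproj, of_apply, hsupp]
  split_ifs with hg <;> simp [hg]

theorem jointState_update_zero_vecMul_Qproj [∀ k, NeZero (T k)] (i : Fin N) (k : Fin (T i)) :
    jointState Ψ (update 0 i k) ᵥ* Qproj Tidx i = Ψ i k (Tidx i) • tileVec Ψ Tidx i := by
  funext g
  by_cases hg : g i = Tidx i
  · have hupd : update g i (Tidx i) = g := by rw [← hg, update_eq_self]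
    rw [vecMul_Qproj_apply, if_pos hg, hupd, jointState_update_zero_apply]
    simp [tileVec, hg]
  · simp [vecMul_Qproj_apply, tileVec, hg]

theorem jointState_zero_vecMul_Qproj [∀ k, NeZero (T k)] (i : Fin N) :
    jointState Ψ 0 ᵥ* Qproj Tidx i = Ψ i 0 (Tidx i) • tileVec Ψ Tidx i := by
  simpa using jointState_update_zero_vecMul_Qproj (Ψ := Ψ) (Tidx := Tidx) i 0

theorem tileVec_dotProduct_jointState_zero [∀ k, NeZero (T k)]
    (hΨ : ∀ i, of (Ψ i) * (of (Ψ i))ᵀ = 1) (i : Fin N) :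
    tileVec Ψ Tidx i ⬝ᵥ jointState Ψ 0 = Ψ i 0 (Tidx i) := by
  simp [tileVec_eq_sum hΨ, sum_dotProduct, jointState_dotProduct hΨ, update_eq_self_iff]

theorem Pminus_eq_vecMulVec [∀ k, NeZero (T k)] (hreal : ∀ i k t, (Ψ i k t).im = 0) :
    Pminus Ψ = vecMulVec (jointState Ψ 0) (jointState Ψ 0) := by
  ext g g'
  simp only [Pminus, jointState, of_apply, vecMulVec_apply, prod_mul_distrib, Pi.zero_apply,
    Complex.star_def, Complex.conj_eq_iff_im.mpr (hreal _ _ _)]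

theorem Gplus_eq_sum [∀ k, NeZero (T k)] (hreal : ∀ i k t, (Ψ i k t).im = 0) :
    Gplus Ψ μ C z = ∑ f ∈ univ.erase 0,
      jointResolvent μ C z f • vecMulVec (jointState Ψ f) (jointState Ψ f) := by
  ext g g'
  simp only [Gplus, jointState, jointResolvent, of_apply, Matrix.sum_apply, Matrix.smul_apply,
    vecMulVec_apply, smul_eq_mul, star_prod, Complex.star_def,
    Complex.conj_eq_iff_im.mpr (hreal _ _ _), mul_assoc]
  rfl

theorem Pminus_mul_Gplus [∀ k, NeZero (T k)] (hΨ : ∀ i, of (Ψ i) * (of (Ψ i))ᵀ = 1)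
    (hreal : ∀ i k t, (Ψ i k t).im = 0) : Pminus Ψ * Gplus Ψ μ C z = 0 := by
  rw [Pminus_eq_vecMulVec hreal, Gplus_eq_sum hreal, vecMulVec_mul,
    vecMul_sum_smul_vecMulVec_self (jointState_dotProduct hΨ), if_neg (notMem_erase 0 _),
    vecMulVec_zero]

theorem Gplus_mul_Pminus [∀ k, NeZero (T k)] (hΨ : ∀ i, of (Ψ i) * (of (Ψ i))ᵀ = 1)
    (hreal : ∀ i k t, (Ψ i k t).im = 0) : Gplus Ψ μ C z * Pminus Ψ = 0 := by
  have hP : (Pminus Ψ)ᵀ = Pminus Ψ := by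
    rw [Pminus_eq_vecMulVec hreal, transpose_vecMulVec]
  have hG : (Gplus Ψ μ C z)ᵀ = Gplus Ψ μ C z := by
    simp only [Gplus_eq_sum hreal, transpose_sum, transpose_smul, transpose_vecMulVec]
  rw [← hP, ← hG, ← transpose_mul, Pminus_mul_Gplus hΨ hreal, transpose_zero]

theorem jointResolvent_update_zero [∀ k, NeZero (T k)] (hground : ∀ i, μ i 0 = 0) (i : Fin N)
    (k : Fin (T i)) : jointResolvent μ C z (update 0 i k) = (z - (C : ℂ) * (μ i k : ℂ))⁻¹ := by
  rw [jointResolvent, ← add_sum_erase univ _ (mem_univ i), update_self,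
    sum_eq_zero fun j hj => by rw [update_of_ne (ne_of_mem_erase hj), Pi.zero_apply, hground,
      Complex.ofReal_zero], add_zero]

theorem eta_eq_sum [∀ k, NeZero (T k)] (hreal : ∀ i k t, (Ψ i k t).im = 0) (i : Fin N) :
    eta Ψ μ C z Tidx i =
      ∑ k ∈ univ.erase 0, (z - (C : ℂ) * (μ i k : ℂ))⁻¹ * Ψ i k (Tidx i) ^ 2 := by
  refine sum_congr rfl fun k _ => ?_
  have hre : ((Ψ i k (Tidx i)).re : ℂ) = Ψ i k (Tidx i) :=
    Complex.conj_eq_iff_re.mp (Complex.conj_eq_iff_im.mpr (hreal _ _ _))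
  rw [← hre, Complex.norm_real, Real.norm_eq_abs, sq_abs, Complex.ofReal_pow]

theorem jointState_update_zero_vecMul_Gplus [∀ k, NeZero (T k)]
    (hΨ : ∀ i, of (Ψ i) * (of (Ψ i))ᵀ = 1) (hreal : ∀ i k t, (Ψ i k t).im = 0)
    (hground : ∀ i, μ i 0 = 0) (i : Fin N) (k : Fin (T i)) :
    jointState Ψ (update 0 i k) ᵥ* Gplus Ψ μ C z =
      if k = 0 then 0 else (z - (C : ℂ) * (μ i k : ℂ))⁻¹ • jointState Ψ (update 0 i k) := by
  rw [Gplus_eq_sum hreal, vecMul_sum_smul_vecMulVec_self (jointState_dotProduct hΨ)]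
  simp only [mem_erase, ne_eq, update_eq_self_iff, Pi.zero_apply, mem_univ, and_true, ite_not,
    jointResolvent_update_zero hground]

theorem tileVec_vecMul_Gplus_mul_Qproj [∀ k, NeZero (T k)]
    (hΨ : ∀ i, of (Ψ i) * (of (Ψ i))ᵀ = 1) (hreal : ∀ i k t, (Ψ i k t).im = 0)
    (hground : ∀ i, μ i 0 = 0) (i : Fin N) :
    tileVec Ψ Tidx i ᵥ* (Gplus Ψ μ C z * Qproj Tidx i) =
      eta Ψ μ C z Tidx i • tileVec Ψ Tidx i := by
  calc tileVec Ψ Tidx i ᵥ* (Gplus Ψ μ C z * Qproj Tidx i)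
      = ∑ k, Ψ i k (Tidx i) •
          (jointState Ψ (update 0 i k) ᵥ* Gplus Ψ μ C z) ᵥ* Qproj Tidx i := by
        rw [← vecMul_vecMul, tileVec_eq_sum hΨ, sum_vecMul, sum_vecMul]
        simp only [smul_vecMul]
    _ = ∑ k ∈ univ.erase 0, ((z - (C : ℂ) * (μ i k : ℂ))⁻¹ * Ψ i k (Tidx i) ^ 2) •
          tileVec Ψ Tidx i := by
        rw [← add_sum_erase _ _ (mem_univ (0 : Fin (T i))),
          jointState_update_zero_vecMul_Gplus hΨ hreal hground, if_pos rfl, zero_vecMul,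
          smul_zero, zero_add]
        refine sum_congr rfl fun k hk => ?_
        rw [jointState_update_zero_vecMul_Gplus hΨ hreal hground, if_neg (ne_of_mem_erase hk),
          smul_vecMul, jointState_update_zero_vecMul_Qproj, smul_smul, smul_smul]
        congr 1
        ring
    _ = eta Ψ μ C z Tidx i • tileVec Ψ Tidx i := by rw [eta_eq_sum hreal, sum_smul]

theorem ancilla_selfEnergy_term [∀ k, NeZero (T k)]
    (hΨ : ∀ i, of (Ψ i) * (of (Ψ i))ᵀ = 1) (hreal : ∀ i k t, (Ψ i k t).im = 0)
    (hground : ∀ i, μ i 0 = 0) (i : Fin N) (n : ℕ) :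
    Pminus Ψ * Qproj Tidx i * (1 - Pminus Ψ) *
        (Gplus Ψ μ C z * ((1 - Pminus Ψ) * Qproj Tidx i * (1 - Pminus Ψ))) ^ n *
        (Gplus Ψ μ C z * ((1 - Pminus Ψ) * Qproj Tidx i * Pminus Ψ)) =
      (Ψ i 0 (Tidx i) ^ 2 * eta Ψ μ C z Tidx i ^ (n + 1)) • Pminus Ψ := by
  have hPG : (1 - Pminus Ψ) * Gplus Ψ μ C z = Gplus Ψ μ C z := by
    rw [sub_mul, one_mul, Pminus_mul_Gplus hΨ hreal, sub_zero]
  have hGP : Gplus Ψ μ C z * (1 - Pminus Ψ) = Gplus Ψ μ C z := by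
    rw [mul_sub, mul_one, Gplus_mul_Pminus hΨ hreal, sub_zero]
  have hrow : jointState Ψ 0 ᵥ* (Qproj Tidx i * (Gplus Ψ μ C z * Qproj Tidx i) ^ (n + 1)) =
      (Ψ i 0 (Tidx i) * eta Ψ μ C z Tidx i ^ (n + 1)) • tileVec Ψ Tidx i := by
    rw [← vecMul_vecMul, jointState_zero_vecMul_Qproj, smul_vecMul,
      vecMul_pow_of_vecMul_eq_smul (tileVec_vecMul_Gplus_mul_Qproj hΨ hreal hground i), smul_smul]
  rw [mul_projected_chain hPG hGP, mul_assoc (Pminus Ψ), Pminus_eq_vecMulVec hreal,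
    vecMulVec_self_mul_mul_vecMulVec_self, hrow, smul_dotProduct,
    tileVec_dotProduct_jointState_zero hΨ, smul_eq_mul]
  congr 1
  ring

end Ancilla

section Kron

variable {σ ι : Type*} {N : ℕ} {T : Fin N → ℕ}

theorem kron_zero_left (Q : Matrix (Anc T) (Anc T) ℂ) : kron (0 : Matrix σ σ ℂ) Q = 0 := by
  ext x y
  simp [kron]

theorem kron_smul (c : ℂ) (M : Matrix σ σ ℂ) (Q : Matrix (Anc T) (Anc T) ℂ) :
    kron M (c • Q) = c • kron M Q := by
  ext x y
  simp only [kron, of_apply, Matrix.smul_apply, smul_eq_mul]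
  ring

variable [Fintype σ] [Fintype ι]

theorem kron_mul_kron (M M' : Matrix σ σ ℂ) (Q Q' : Matrix (Anc T) (Anc T) ℂ) :
    kron M Q * kron M' Q' = kron (M * M') (Q * Q') := by
  ext x y
  simp only [kron, mul_apply, of_apply, Fintype.sum_prod_type, sum_mul_sum]
  exact sum_congr rfl fun s _ => sum_congr rfl fun a _ => by ring

theorem sum_kron_mul_sum_kron {A h : ι → Matrix σ σ ℂ} (hAh : ∀ i j, i ≠ j → A i * h j = 0)
    (B D : ι → Matrix (Anc T) (Anc T) ℂ) :
    (∑ i, kron (A i) (B i)) * ∑ i, kron (h i) (D i) = ∑ i, kron (A i * h i) (B i * D i) := by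
  rw [sum_mul_sum]
  refine sum_congr rfl fun i _ => ?_
  rw [sum_eq_single i (fun j _ hji => by rw [kron_mul_kron, hAh i j hji.symm, kron_zero_left])
    (fun hi => absurd (mem_univ i) hi), kron_mul_kron]

variable [DecidableEq σ]

theorem kron_one_mul_sum_kron (h : ι → Matrix σ σ ℂ) (Q : ι → Matrix (Anc T) (Anc T) ℂ)
    (X : Matrix (Anc T) (Anc T) ℂ) :
    kron 1 X * ∑ i, kron (h i) (Q i) = ∑ i, kron (h i) (X * Q i) := by
  simp only [mul_sum, kron_mul_kron, one_mul]

theorem kron_one_mul_sum_kron_mul_kron_one (h : ι → Matrix σ σ ℂ)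
    (Q : ι → Matrix (Anc T) (Anc T) ℂ) (X Y : Matrix (Anc T) (Anc T) ℂ) :
    kron 1 X * (∑ i, kron (h i) (Q i)) * kron 1 Y = ∑ i, kron (h i) (X * Q i * Y) := by
  simp only [kron_one_mul_sum_kron, sum_mul, kron_mul_kron, mul_one]

theorem sum_kron_mul_sum_kron_pow {h : ι → Matrix σ σ ℂ} (hh : ∀ i j, i ≠ j → h i * h j = 0)
    (B D : ι → Matrix (Anc T) (Anc T) ℂ) (n : ℕ) :
    (∑ i, kron (h i) (B i)) * (∑ i, kron (h i) (D i)) ^ n =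
      ∑ i, kron (h i ^ (n + 1)) (B i * D i ^ n) := by
  induction n with
  | zero => simp
  | succ n ih =>
    have hpow : ∀ i j, i ≠ j → h i ^ (n + 1) * h j = 0 := fun i j hij => by
      rw [pow_succ, mul_assoc, hh i j hij, mul_zero]
    rw [pow_succ, ← mul_assoc, ih, sum_kron_mul_sum_kron hpow]
    simp only [pow_succ, mul_assoc]

theorem sum_kron_mul_sum_kron_pow_mul {h : ι → Matrix σ σ ℂ}
    (hh : ∀ i j, i ≠ j → h i * h j = 0) (B D E : ι → Matrix (Anc T) (Anc T) ℂ) (n : ℕ) :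
    (∑ i, kron (h i) (B i)) * (∑ i, kron (h i) (D i)) ^ n * ∑ i, kron (h i) (E i) =
      ∑ i, kron (h i ^ (n + 2)) (B i * D i ^ n * E i) := by
  have hpow : ∀ i j, i ≠ j → h i ^ (n + 1) * h j = 0 := fun i j hij => by
    rw [pow_succ, mul_assoc, hh i j hij, mul_zero]
  rw [sum_kron_mul_sum_kron_pow hh, sum_kron_mul_sum_kron hpow]
  simp only [← pow_succ]

end Kron

theorem Qproj_mul_Qproj_apply_self {N : ℕ} {T : Fin N → ℕ} (Tidx : ∀ k : Fin N, Fin (T k))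
    (i j : Fin N) : (Qproj Tidx i * Qproj Tidx j) Tidx Tidx = 1 := by
  have h := congrFun (single_one_vecMul Tidx (Qproj Tidx i * Qproj Tidx j)) Tidx
  have hQ : Qproj Tidx i Tidx Tidx = 1 := by simp [Qproj]
  rw [← vecMul_vecMul] at h
  simpa [vecMul_Qproj_apply, hQ] using h.symm

theorem mul_eq_zero_of_kron_Qproj_mul_kron_Qproj {σ : Type*} [Fintype σ] {N : ℕ}
    {T : Fin N → ℕ} {Tidx : ∀ k : Fin N, Fin (T k)} {M M' : Matrix σ σ ℂ} {i j : Fin N}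
    (hMM' : kron M (Qproj Tidx i) * kron M' (Qproj Tidx j) = 0) : M * M' = 0 := by
  rw [kron_mul_kron] at hMM'
  ext x y
  simpa [kron, Qproj_mul_Qproj_apply_self] using
    congrFun (congrFun hMM' (x, Tidx)) (y, Tidx)

end TiledSelfEnergy

open TiledSelfEnergy in
theorem stmt14_general {σ : Type*} [Fintype σ] [DecidableEq σ]
    {N : ℕ} {T : Fin N → ℕ} [∀ k, NeZero (T k)]
    (h : Fin N → Matrix σ σ ℂ)
    (Tidx : ∀ k : Fin N, Fin (T k))
    (Ψ : ∀ k : Fin N, Fin (T k) → Fin (T k) → ℂ)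
    (μ : ∀ k : Fin N, Fin (T k) → ℝ) (C : ℝ) (z : ℂ)
    (horth : ∀ i k l, star (Ψ i k) ⬝ᵥ Ψ i l = if k = l then (1 : ℂ) else 0)
    (hreal : ∀ i k t, (Ψ i k t).im = 0)
    (hground : ∀ i, μ i 0 = 0)
    (hcross : ∀ i j, i ≠ j →
      kron (h i) (Qproj Tidx i) * kron (h j) (Qproj Tidx j) = 0) :
    ∀ n : ℕ,
      let V : Matrix (σ × Anc T) (σ × Anc T) ℂ := ∑ i, kron (h i) (Qproj Tidx i)
      let Pm := Pminus (T := T) Ψ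
      let Pp : Matrix (Anc T) (Anc T) ℂ := 1 - Pm
      let Gf := kron (1 : Matrix σ σ ℂ) (Gplus Ψ μ C z)
      let Vmp := kron 1 Pm * V * kron 1 Pp
      let Vp := kron 1 Pp * V * kron 1 Pp
      let Vpm := kron 1 Pp * V * kron 1 Pm
      Vmp * (Gf * Vp) ^ n * (Gf * Vpm) =
        ∑ i, ((((Ψ i 0 (Tidx i)).re : ℂ)) ^ 2 * (eta Ψ μ C z Tidx i) ^ (n + 1)) •
          kron ((h i) ^ (n + 2)) Pm := by
  intro n
  dsimp only
  have hΨ i := of_mul_transpose_eq_one_of_isReal (horth i) (hreal i)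
  have hh i j (hij : i ≠ j) : h i * h j = 0 :=
    mul_eq_zero_of_kron_Qproj_mul_kron_Qproj (hcross i j hij)
  rw [kron_one_mul_sum_kron_mul_kron_one, kron_one_mul_sum_kron_mul_kron_one,
    kron_one_mul_sum_kron_mul_kron_one, kron_one_mul_sum_kron, kron_one_mul_sum_kron,
    sum_kron_mul_sum_kron_pow_mul hh]
  refine Finset.sum_congr rfl fun i _ => ?_
  rw [ancilla_selfEnergy_term hΨ hreal hground, kron_smul,
    Complex.conj_eq_iff_re.mp (Complex.conj_eq_iff_im.mpr (hreal i 0 (Tidx i)))]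

/-- Order-`n` term of the self-energy series when tiling kills all cross terms:
`V₋₊ (G₊V₊)^n G₊ V₊₋ = ∑_i p_{0,i}² η_i^{n+1} · h_i^{n+2} ⊗ Π₋`. -/
theorem stmt14 {σ : Type*} [Fintype σ] [DecidableEq σ]
    {N : ℕ} {T : Fin N → ℕ} [∀ k, NeZero (T k)]
    (h : Fin N → Matrix σ σ ℂ) (hherm : ∀ i, (h i).IsHermitian)
    (Tidx : ∀ k : Fin N, Fin (T k))
    (Ψ : ∀ k : Fin N, Fin (T k) → Fin (T k) → ℂ)
    (μ : ∀ k : Fin N, Fin (T k) → ℝ) (C : ℝ) (z : ℂ)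
    (horth : ∀ i k l, star (Ψ i k) ⬝ᵥ Ψ i l = if k = l then (1 : ℂ) else 0)
    (hreal : ∀ i k t, (Ψ i k t).im = 0)
    (hground : ∀ i, μ i 0 = 0)
    (hexc : ∀ i k, k ≠ 0 → 0 < μ i k)
    (hres : ∀ (f : Anc T), f ≠ (fun k => 0) → z - (C : ℂ) * ∑ k, (μ k (f k) : ℂ) ≠ 0)
    (hcross : ∀ i j, i ≠ j →
      kron (h i) (Qproj Tidx i) * kron (h j) (Qproj Tidx j) = 0) :
    ∀ n : ℕ,
      let V : Matrix (σ × Anc T) (σ × Anc T) ℂ := ∑ i, kron (h i) (Qproj Tidx i)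
      let Pm := Pminus (T := T) Ψ
      let Pp : Matrix (Anc T) (Anc T) ℂ := 1 - Pm
      let Gf := kron (1 : Matrix σ σ ℂ) (Gplus Ψ μ C z)
      let Vmp := kron 1 Pm * V * kron 1 Pp
      let Vp := kron 1 Pp * V * kron 1 Pp
      let Vpm := kron 1 Pp * V * kron 1 Pm
      Vmp * (Gf * Vp) ^ n * (Gf * Vpm) =
        ∑ i, ((((Ψ i 0 (Tidx i)).re : ℂ)) ^ 2 * (eta Ψ μ C z Tidx i) ^ (n + 1)) •
          kron ((h i) ^ (n + 2)) Pm :=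
  stmt14_general h Tidx Ψ μ C z horth hreal hground hcross
end
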